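/- Let $k$ be a field and $A = k[s,t]/(st)$ graded with $|s|=1$, $|t|=-1$. Each module $M(m,I)$ is indecomposable as a graded $A$-module, i.e., it is nonzero and is not isomorphic to a direct sum of two nonzero graded $A$-modules. -/

import Mathlib

open scoped Classical

namespace Paper

variable (k : Type) [Field k]

/-- A nonnegatively graded module over `A = k[s,t]/(st)`, given componentwise. -/
structure GM where
  M : ℕ → Type
  [acg : ∀ i, AddCommGroup (M i)]
  [mod : ∀ i, Module k (M i)]
  s : ∀ i, M i →ₗ[k] M (i + 1)
  t : ∀ i, M (i + 1) →ₗ[k] M i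
  ts : ∀ i x, t i (s i x) = 0
  st : ∀ i x, s i (t i x) = 0

attribute [instance] GM.acg GM.mod

variable {k}

/-- Morphisms of graded `A`-modules. -/
structure Hom (M N : GM k) where
  f : ∀ i, M.M i →ₗ[k] N.M i
  comm_s : ∀ i x, f (i + 1) (M.s i x) = N.s i (f i x)
  comm_t : ∀ i x, f i (M.t i x) = N.t i (f (i + 1) x)

/-- Isomorphism of graded `A`-modules. -/
def GMIso (M N : GM k) : Prop := ∃ f : Hom M N, ∀ i, Function.Bijective (f.f i)

/-- A morphism is (componentwise) injective. -/
def InjHom {M N : GM k} (f : Hom M N) : Prop := ∀ i, Function.Injective (f.f i)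

/-- Purity of (the image of) a morphism, via the concrete characterization
`sN_i ⊓ P_{i+1} = sP_i` and `tN_{i+1} ⊓ P_i = tP_{i+1}`. -/
def IsPure {M N : GM k} (f : Hom M N) : Prop :=
  ∀ i,
    LinearMap.range (N.s i) ⊓ LinearMap.range (f.f (i + 1)) =
      LinearMap.range ((N.s i).comp (f.f i)) ∧
    LinearMap.range (N.t i) ⊓ LinearMap.range (f.f i) =
      LinearMap.range ((N.t i).comp (f.f (i + 1)))

/-- Index `(m, I)` of a string module: `0 ≤ m ≤ ∞` and `I ⊆ {1, …, m}`. -/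
structure StringIndex where
  m : ℕ∞
  I : Set ℕ
  hI : ∀ i ∈ I, 1 ≤ i ∧ (i : ℕ∞) ≤ m

variable (k)

/-- Degree-`i` component of the `n`-fold suspension of the string module `M(m,I)`:
a copy of `k` if `n ≤ i ≤ n + m`, and `0` otherwise. -/
def SC (n : ℕ) (σ : StringIndex) (i : ℕ) : Submodule k k :=
  if n ≤ i ∧ (i : ℕ∞) ≤ (n : ℕ∞) + σ.m then ⊤ else ⊥

lemma SC_top (n : ℕ) (σ : StringIndex) (i : ℕ) (h1 : n ≤ i)
    (h2 : (i : ℕ∞) ≤ (n : ℕ∞) + σ.m) : SC k n σ i = ⊤ := by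
  simp [SC, h1, h2]

/-- The `s`-multiplication on the suspended string module. -/
noncomputable def smap (n : ℕ) (σ : StringIndex) (i : ℕ) :
    SC k n σ i →ₗ[k] SC k n σ (i + 1) :=
  if h : ((i + 1 : ℕ) : ℕ∞) ≤ (n : ℕ∞) + σ.m ∧ (i + 1 - n) ∈ σ.I then
    Submodule.inclusion (by
      have h1 : 1 ≤ i + 1 - n := (σ.hI _ h.2).1
      have hn : n ≤ i + 1 := by omega
      rw [SC_top k n σ (i + 1) hn h.1]
      exact le_top)
  else 0

/-- The `t`-multiplication on the suspended string module. -/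
noncomputable def tmap (n : ℕ) (σ : StringIndex) (i : ℕ) :
    SC k n σ (i + 1) →ₗ[k] SC k n σ i :=
  if h : n ≤ i ∧ (i + 1 - n) ∉ σ.I then
    Submodule.inclusion (by
      by_cases hc : n ≤ i + 1 ∧ ((i + 1 : ℕ) : ℕ∞) ≤ (n : ℕ∞) + σ.m
      · have hi : (i : ℕ∞) ≤ (n : ℕ∞) + σ.m :=
          le_trans (by exact_mod_cast Nat.le_succ i) hc.2
        rw [SC_top k n σ i h.1 hi]
        exact le_top
      · have hcc : ¬(((i + 1 : ℕ) : ℕ∞) ≤ (n : ℕ∞) + σ.m) :=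
          fun hh => hc ⟨by omega, hh⟩
        have : SC k n σ (i + 1) = ⊥ := by
          rw [SC, if_neg (fun hh => hcc hh.2)]
        rw [this]; exact bot_le)
  else 0

/-- The `n`-fold suspension `Σⁿ M(m, I)` of the string module `M(m, I)`. -/
noncomputable def SM (n : ℕ) (σ : StringIndex) : GM k where
  M i := SC k n σ i
  s i := smap k n σ i
  t i := tmap k n σ i
  ts i x := by
    by_cases h : ((i + 1 : ℕ) : ℕ∞) ≤ (n : ℕ∞) + σ.m ∧ (i + 1 - n) ∈ σ.I
    · have h' : ¬(n ≤ i ∧ (i + 1 - n) ∉ σ.I) := fun hc => hc.2 h.2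
      simp only [tmap, dif_neg h', LinearMap.zero_apply]
    · simp only [smap, dif_neg h, LinearMap.zero_apply, map_zero]
  st i x := by
    by_cases h : n ≤ i ∧ (i + 1 - n) ∉ σ.I
    · have h' : ¬(((i + 1 : ℕ) : ℕ∞) ≤ (n : ℕ∞) + σ.m ∧ (i + 1 - n) ∈ σ.I) :=
        fun hc => h.2 hc.2
      simp only [smap, dif_neg h', LinearMap.zero_apply]
    · simp only [tmap, dif_neg h, LinearMap.zero_apply, map_zero]

/-- The defining generator `x_i` of the (suspended) string module. -/
def xg (n : ℕ) (σ : StringIndex) (i : ℕ) (h1 : n ≤ i)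
    (h2 : (i : ℕ∞) ≤ (n : ℕ∞) + σ.m) : SC k n σ i :=
  ⟨1, by rw [SC_top k n σ i h1 h2]; trivial⟩

variable {k}

/-- A graded module is nontrivial. -/
def Nontriv (M : GM k) : Prop := ∃ i, ∃ x : M.M i, x ≠ 0

/-- Binary direct sum of graded `A`-modules. -/
def dsum (M N : GM k) : GM k where
  M i := M.M i × N.M i
  s i := (M.s i).prodMap (N.s i)
  t i := (M.t i).prodMap (N.t i)
  ts i x := by cases x with | mk a b => simp [M.ts, N.ts, Prod.ext_iff]
  st i x := by cases x with | mk a b => simp [M.st, N.st, Prod.ext_iff]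

/-- Indecomposability of a graded `A`-module. -/
def Indec (M : GM k) : Prop :=
  Nontriv M ∧ ∀ N P : GM k, GMIso M (dsum N P) → ¬(Nontriv N ∧ Nontriv P)

/-- Direct sum of a family of graded `A`-modules. -/
noncomputable def gdsum {ι : Type} (F : ι → GM k) : GM k where
  M i := Π₀ j : ι, (F j).M i
  s i := DFinsupp.mapRange.linearMap (fun j => (F j).s i)
  t i := DFinsupp.mapRange.linearMap (fun j => (F j).t i)
  ts i x := by
    ext j
    simp [(F j).ts]
  st i x := by
    ext j
    simp [(F j).st]

/-- The (lexicographic-type) well-order on string indices: `t` before `s`. -/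
def idxLE (σ τ : StringIndex) : Prop :=
  (σ.m ≤ τ.m ∧ τ.I ∩ {j | (j : ℕ∞) ≤ σ.m} = σ.I) ∨
  (∃ i ∈ τ.I, i ∉ σ.I ∧ σ.I ∩ {j | j < i} = τ.I ∩ {j | j < i})

end Paper

namespace Paper

variable {k : Type} [Field k]

lemma SC_ne_zero_range {σ : StringIndex} {i : ℕ} (x : SC k 0 σ i) (hx : x ≠ 0) :
    (i : ℕ∞) ≤ σ.m := by
  by_contra h
  have hb : SC k 0 σ i = ⊥ := by
    rw [SC, if_neg]
    rintro ⟨-, h2⟩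
    exact h (by simpa using h2)
  apply hx
  have hz : (x : k) ∈ (⊥ : Submodule k k) := by rw [← hb]; exact x.2
  exact Subtype.ext hz

lemma incl_bij {p q : Submodule k k} (h : p ≤ q) (h' : q ≤ p) :
    Function.Bijective (Submodule.inclusion h) := by
  constructor
  · exact Submodule.inclusion_injective h
  · intro y
    exact ⟨⟨y.1, h' y.2⟩, Subtype.ext rfl⟩

lemma step_bij {σ : StringIndex} {i : ℕ}
    (h : ((i + 1 : ℕ) : ℕ∞) ≤ σ.m) :
    Function.Bijective ((SM k 0 σ).s i) ∨ Function.Bijective ((SM k 0 σ).t i) := by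
  have hi : (i : ℕ∞) ≤ σ.m := le_trans (by exact_mod_cast Nat.le_succ i) h
  have htopi : SC k 0 σ i = ⊤ := SC_top k 0 σ i (Nat.zero_le _) (by simpa using hi)
  have htopi1 : SC k 0 σ (i + 1) = ⊤ := SC_top k 0 σ (i + 1) (Nat.zero_le _) (by simpa using h)
  by_cases hI : (i + 1) ∈ σ.I
  · left
    show Function.Bijective (smap k 0 σ i)
    rw [smap, dif_pos (by simpa using ⟨h, hI⟩)]
    exact incl_bij _ (by rw [htopi, htopi1])
  · right
    show Function.Bijective (tmap k 0 σ i)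
    rw [tmap, dif_pos (by simpa using hI)]
    exact incl_bij _ (by rw [htopi, htopi1])

lemma bij_transfer_s {M D : GM k} (f : Hom M D) (hf : ∀ i, Function.Bijective (f.f i))
    (i : ℕ) (hs : Function.Bijective (M.s i)) : Function.Bijective (D.s i) := by
  have h1 : (D.s i) ∘ (f.f i) = (f.f (i + 1)) ∘ (M.s i) := funext fun x => (f.comm_s i x).symm
  have h2 : Function.Bijective ((D.s i) ∘ (f.f i)) := by
    rw [h1]; exact (hf _).comp hs
  exact (Function.Bijective.of_comp_iff _ (hf i)).mp h2

lemma bij_transfer_t {M D : GM k} (f : Hom M D) (hf : ∀ i, Function.Bijective (f.f i))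
    (i : ℕ) (ht : Function.Bijective (M.t i)) : Function.Bijective (D.t i) := by
  have h1 : (D.t i) ∘ (f.f (i + 1)) = (f.f i) ∘ (M.t i) := funext fun x => (f.comm_t i x).symm
  have h2 : Function.Bijective ((D.t i) ∘ (f.f (i + 1))) := by
    rw [h1]; exact (hf _).comp ht
  exact (Function.Bijective.of_comp_iff _ (hf (i + 1))).mp h2

lemma prodMap_bij {A B C D : Type} [AddCommGroup A] [AddCommGroup B] [AddCommGroup C]
    [AddCommGroup D] [Module k A] [Module k B] [Module k C] [Module k D]
    (g : A →ₗ[k] B) (h : C →ₗ[k] D) (H : Function.Bijective (g.prodMap h)) :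
    Function.Bijective g ∧ Function.Bijective h := by
  constructor
  · constructor
    · intro a b hab
      have : g.prodMap h (a, 0) = g.prodMap h (b, 0) := by
        simp [LinearMap.prodMap_apply, hab]
      exact congrArg Prod.fst (H.1 this)
    · intro y
      obtain ⟨⟨a, c⟩, hac⟩ := H.2 (y, 0)
      exact ⟨a, congrArg Prod.fst hac⟩
  · constructor
    · intro a b hab
      have : g.prodMap h (0, a) = g.prodMap h (0, b) := by
        simp [LinearMap.prodMap_apply, hab]
      exact congrArg Prod.snd (H.1 this)
    · intro y
      obtain ⟨⟨a, c⟩, hac⟩ := H.2 (0, y)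
      exact ⟨c, congrArg Prod.snd hac⟩

lemma no_both {σ : StringIndex} {N P : GM k}
    (f : Hom (SM k 0 σ) (dsum N P)) (hf : ∀ i, Function.Bijective (f.f i))
    (j : ℕ) (n : N.M j) (hn : n ≠ 0) (p : P.M j) (hp : p ≠ 0) : False := by
  have key : ∀ (a b : SC k 0 σ j), f.f j a = (n, 0) → f.f j b = (0, p) → False := by
    intro a b ha hb
    have ha0 : (a : k) ≠ 0 := by
      intro h0
      have : a = 0 := Subtype.ext h0
      rw [this] at ha
      replace ha := (ha.symm.trans (f.f j).map_zero).symm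
      exact hn (congrArg Prod.fst ha).symm
    set c : k := (b : k) * (a : k)⁻¹ with hc
    have hba : b = c • a := by
      apply Subtype.ext
      show (b : k) = c * (a : k)
      rw [hc, mul_assoc, inv_mul_cancel₀ ha0, mul_one]
    have hkey : ((0, p) : N.M j × P.M j) = c • ((n, 0) : N.M j × P.M j) := by
      rw [← ha, ← hb, hba]
      exact map_smul (f.f j) c a
    have hp0 : p = c • (0 : P.M j) := congrArg Prod.snd hkey
    rw [smul_zero] at hp0
    exact hp hp0
  obtain ⟨a, ha⟩ := (hf j).2 ((n, 0) : N.M j × P.M j)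
  obtain ⟨b, hb⟩ := (hf j).2 ((0, p) : N.M j × P.M j)
  exact key a b ha hb

lemma propagate {σ : StringIndex} {N P : GM k}
    (f : Hom (SM k 0 σ) (dsum N P)) (hf : ∀ i, Function.Bijective (f.f i)) :
    ∀ (d i : ℕ), ((i + d : ℕ) : ℕ∞) ≤ σ.m →
      ((∃ x : N.M i, x ≠ 0) → ∃ x : N.M (i + d), x ≠ 0) ∧
      ((∃ x : P.M i, x ≠ 0) → ∃ x : P.M (i + d), x ≠ 0) := by
  intro d
  induction d with
  | zero => intro i _; exact ⟨id, id⟩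
  | succ d ih =>
    intro i hrange
    have hrange' : ((i + d : ℕ) : ℕ∞) ≤ σ.m :=
      le_trans (by exact_mod_cast Nat.le_succ (i + d)) hrange
    obtain ⟨ihN, ihP⟩ := ih i hrange'
    have hstep := step_bij (k := k) (σ := σ) (i := i + d) (by exact_mod_cast hrange)
    rcases hstep with hs | ht
    · have hD : Function.Bijective ((dsum N P).s (i + d)) := bij_transfer_s f hf _ hs
      obtain ⟨hNs, hPs⟩ := prodMap_bij (N.s (i + d)) (P.s (i + d)) hD
      constructor
      · rintro hx
        obtain ⟨x, hx⟩ := ihN hx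
        exact ⟨N.s (i + d) x, fun h0 => hx (hNs.1 (by rw [h0, map_zero]))⟩
      · rintro hx
        obtain ⟨x, hx⟩ := ihP hx
        exact ⟨P.s (i + d) x, fun h0 => hx (hPs.1 (by rw [h0, map_zero]))⟩
    · have hD : Function.Bijective ((dsum N P).t (i + d)) := bij_transfer_t f hf _ ht
      obtain ⟨hNt, hPt⟩ := prodMap_bij (N.t (i + d)) (P.t (i + d)) hD
      constructor
      · rintro hx
        obtain ⟨x, hx⟩ := ihN hx
        obtain ⟨y, hy⟩ := hNt.2 x
        exact ⟨y, fun h0 => hx (by rw [← hy, h0, map_zero])⟩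
      · rintro hx
        obtain ⟨x, hx⟩ := ihP hx
        obtain ⟨y, hy⟩ := hPt.2 x
        exact ⟨y, fun h0 => hx (by rw [← hy, h0, map_zero])⟩


/-- every string module `M(m,I)` is indecomposable. -/
theorem string_module_indecomposable
    (k : Type) [Field k] (σ : StringIndex) :
    Indec (SM k 0 σ) := by
  constructor
  · refine ⟨0, xg k 0 σ 0 le_rfl (by simp), ?_⟩
    intro h
    have := congrArg Subtype.val h
    simp [xg] at this
    exact one_ne_zero (show (1:k) = 0 from this)
  · rintro N P ⟨f, hf⟩ ⟨⟨i0, n0, hn0⟩, ⟨j0, p0, hp0⟩⟩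
    -- i0 and j0 are in range
    obtain ⟨a, ha⟩ := (hf i0).2 ((n0, 0) : N.M i0 × P.M i0)
    have hai : (i0 : ℕ∞) ≤ σ.m := by
      apply SC_ne_zero_range a
      intro h0
      rw [h0] at ha
      replace ha := (ha.symm.trans (f.f i0).map_zero).symm
      exact hn0 (congrArg Prod.fst ha).symm
    obtain ⟨b, hb⟩ := (hf j0).2 ((0, p0) : N.M j0 × P.M j0)
    have hbj : (j0 : ℕ∞) ≤ σ.m := by
      apply SC_ne_zero_range b
      intro h0
      rw [h0] at hb
      replace hb := (hb.symm.trans (f.f j0).map_zero).symm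
      exact hp0 (congrArg Prod.snd hb).symm
    rcases le_total i0 j0 with hij | hij
    · have heq : i0 + (j0 - i0) = j0 := by omega
      have := (propagate f hf (j0 - i0) i0 (by rw [heq]; exact hbj)).1 ⟨n0, hn0⟩
      rw [heq] at this
      obtain ⟨x, hx⟩ := this
      exact no_both f hf j0 x hx p0 hp0
    · have heq : j0 + (i0 - j0) = i0 := by omega
      have := (propagate f hf (i0 - j0) j0 (by rw [heq]; exact hai)).2 ⟨p0, hp0⟩
      rw [heq] at this
      obtain ⟨x, hx⟩ := this
      exact no_both f hf i0 n0 hn0 x hx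


end Paper
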